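/- Let A be an element of SL(2,ℤ) with trace strictly less than −2. Then A is conjugate within SL(2,ℤ) to a matrix ((a, b), (c, d)) all of whose entries are strictly negative, i.e., there exists P ∈ SL(2,ℤ) such that the matrix B = P A P⁻¹ satisfies B₀₀ < 0, B₀₁ < 0, B₁₀ < 0 and B₁₁ < 0 (equivalently, both column vectors (a, c) and (b, d) of B lie in the open third quadrant of the plane). -/
import Mathlib

open Matrix

abbrev SL2 := Matrix.SpecialLinearGroup (Fin 2) ℤ

private def mk2 (a b c d : ℤ) (h : a * d - b * c = 1) : SL2 :=
  ⟨!![a, b; c, d], by rw [Matrix.det_fin_two_of]; exact h⟩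

private lemma mk2_coe (a b c d : ℤ) (h : a * d - b * c = 1) :
    (mk2 a b c d h : Matrix (Fin 2) (Fin 2) ℤ) = !![a, b; c, d] := rfl

private def Qk (k : ℤ) : SL2 := mk2 k (-1) 1 0 (by ring)

private lemma Qk_inv (k : ℤ) : (Qk k)⁻¹ = mk2 0 1 (-1) k (by ring) := by
  apply inv_eq_of_mul_eq_one_right
  apply Subtype.ext
  show ((Qk k : Matrix (Fin 2) (Fin 2) ℤ) * (mk2 0 1 (-1) k (by ring) : Matrix (Fin 2) (Fin 2) ℤ)) = 1
  rw [Qk, mk2_coe, mk2_coe]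
  ext i j
  fin_cases i <;> fin_cases j <;>
    simp [Matrix.mul_apply, Fin.sum_univ_succ, Matrix.one_apply]

private lemma Qk_conj (k : ℤ) (A : SL2) :
    ((Qk k * A * (Qk k)⁻¹ : SL2) : Matrix (Fin 2) (Fin 2) ℤ) =
      !![(A : Matrix (Fin 2) (Fin 2) ℤ) 1 1 - k * (A : Matrix (Fin 2) (Fin 2) ℤ) 0 1,
         k * ((A : Matrix (Fin 2) (Fin 2) ℤ) 0 0 - (A : Matrix (Fin 2) (Fin 2) ℤ) 1 1
              + k * (A : Matrix (Fin 2) (Fin 2) ℤ) 0 1) - (A : Matrix (Fin 2) (Fin 2) ℤ) 1 0;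
         -(A : Matrix (Fin 2) (Fin 2) ℤ) 0 1,
         (A : Matrix (Fin 2) (Fin 2) ℤ) 0 0 + k * (A : Matrix (Fin 2) (Fin 2) ℤ) 0 1] := by
  rw [Matrix.SpecialLinearGroup.coe_mul, Matrix.SpecialLinearGroup.coe_mul, Qk_inv, Qk,
    mk2_coe, mk2_coe]
  ext i j
  fin_cases i <;> fin_cases j <;>
    simp [Matrix.mul_apply, Matrix.vecMul, dotProduct, Fin.sum_univ_succ] <;> ring

private lemma exists_k_pos (x b : ℤ) (hb : 0 < b) : ∃ k : ℤ, |x + 2 * b * k| ≤ b := by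
  have hm : (0:ℤ) < 2 * b := by linarith
  set r := x % (2 * b) with hr
  have h1 : 0 ≤ r := Int.emod_nonneg x (by positivity)
  have h2 : r < 2 * b := Int.emod_lt_of_pos x hm
  have h3 : x + 2 * b * (-(x / (2*b))) = r := by
    rw [hr, Int.emod_def]; ring
  rcases le_or_gt r b with h | h
  · exact ⟨-(x / (2*b)), by rw [h3, abs_of_nonneg h1]; exact h⟩
  · refine ⟨-(x / (2*b)) - 1, ?_⟩
    have : x + 2 * b * (-(x / (2*b)) - 1) = r - 2*b := by rw [← h3]; ring
    rw [this, abs_of_nonpos (by linarith)]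
    linarith

private lemma exists_k (x b : ℤ) (hb : b ≠ 0) : ∃ k : ℤ, |x + 2 * b * k| ≤ |b| := by
  rcases hb.lt_or_gt with h | h
  · obtain ⟨k, hk⟩ := exists_k_pos x (-b) (by linarith)
    refine ⟨-k, ?_⟩
    rw [abs_of_neg h]
    convert hk using 2; ring
  · obtain ⟨k, hk⟩ := exists_k_pos x b h
    exact ⟨k, by rw [abs_of_pos h]; exact hk⟩

private lemma key : ∀ n : ℕ, ∀ A : SL2,
    9 ≤ ((A : Matrix (Fin 2) (Fin 2) ℤ) 0 0 + (A : Matrix (Fin 2) (Fin 2) ℤ) 1 1)^2 →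
    ((A : Matrix (Fin 2) (Fin 2) ℤ) 0 1).natAbs ≤ n →
    ∃ P : SL2, 0 < ((P * A * P⁻¹ : SL2) : Matrix (Fin 2) (Fin 2) ℤ) 0 1 *
        ((P * A * P⁻¹ : SL2) : Matrix (Fin 2) (Fin 2) ℤ) 1 0 := by
  intro n
  induction n using Nat.strong_induction_on with
  | _ n ih =>
  intro A ht hb
  set a := (A : Matrix (Fin 2) (Fin 2) ℤ) 0 0 with ha
  set b := (A : Matrix (Fin 2) (Fin 2) ℤ) 0 1 with hbdef
  set c := (A : Matrix (Fin 2) (Fin 2) ℤ) 1 0 with hc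
  set d := (A : Matrix (Fin 2) (Fin 2) ℤ) 1 1 with hd
  have hdet : a * d - b * c = 1 := by
    have := A.2
    rw [Matrix.det_fin_two] at this
    exact this
  by_cases hbc : 0 < b * c
  · exact ⟨1, by simpa only [one_mul, inv_one, mul_one] using hbc⟩
  · have hbne : b ≠ 0 := by
      intro h0
      rw [h0] at hdet
      simp at hdet
      rcases Int.mul_eq_one_iff_eq_one_or_neg_one.mp hdet with ⟨h1, h2⟩ | ⟨h1, h2⟩ <;>
        rw [h1, h2] at ht <;> norm_num at ht
    have hcne : c ≠ 0 := by
      intro h0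
      rw [h0] at hdet
      simp at hdet
      rcases Int.mul_eq_one_iff_eq_one_or_neg_one.mp hdet with ⟨h1, h2⟩ | ⟨h1, h2⟩ <;>
        rw [h1, h2] at ht <;> norm_num at ht
    obtain ⟨k, hk⟩ := exists_k (a - d) b hbne
    have hconj := Qk_conj k A
    rw [← ha, ← hbdef, ← hc, ← hd] at hconj
    set b1 : ℤ := k * (a - d + k * b) - c with hb1
    by_cases h1 : 0 < b1 * (-b)
    · refine ⟨Qk k, ?_⟩
      rw [hconj]
      simpa using h1
    · have hdet1 : (d - k*b) * (a + k*b) - b1 * (-b) = 1 := by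
        rw [hb1]; linear_combination hdet
      have hb1ne : b1 ≠ 0 := by
        intro h0
        rw [h0] at hdet1
        simp at hdet1
        rcases Int.mul_eq_one_iff_eq_one_or_neg_one.mp hdet1 with ⟨e1, e2⟩ | ⟨e1, e2⟩ <;>
          nlinarith [ht]
      have hpos : 0 < b1 * b := by
        have hle : b1 * (-b) ≤ 0 := not_lt.mp h1
        have hne : b1 * (-b) ≠ 0 := mul_ne_zero hb1ne (neg_ne_zero.mpr hbne)
        have : b1 * (-b) < 0 := lt_of_le_of_ne hle hne
        nlinarith
      have hid : 4 * (b1 * b) = (a - d + 2*b*k)^2 + 4 - (a + d)^2 := by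
        rw [hb1]; linear_combination 4 * hdet
      have hB1sq : (a - d + 2*b*k)^2 ≤ b^2 := by
        have h2 := abs_le.mp hk
        calc (a - d + 2*b*k)^2 ≤ |b|^2 := sq_le_sq' h2.1 h2.2
        _ = b^2 := sq_abs b
      have h4 : 4 * (b1 * b) ≤ b^2 - 5 := by linarith
      have hp1 : 1 ≤ b1 * b := hpos
      have hb2 : 9 ≤ b^2 := by linarith
      have h16 : 16 * (b1*b)^2 ≤ (b^2 - 5)^2 := by nlinarith
      have key2 : b1 * b1 < b * b := by nlinarith [h16, hp1, hb2]
      have hlt : b1.natAbs < b.natAbs := Int.natAbs_lt_iff_mul_self_lt.mpr key2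
      have htr : 9 ≤ (((Qk k * A * (Qk k)⁻¹ : SL2) : Matrix (Fin 2) (Fin 2) ℤ) 0 0 +
          ((Qk k * A * (Qk k)⁻¹ : SL2) : Matrix (Fin 2) (Fin 2) ℤ) 1 1)^2 := by
        rw [hconj]
        convert ht using 2
        simp
        ring
      have hba : (((Qk k * A * (Qk k)⁻¹ : SL2) : Matrix (Fin 2) (Fin 2) ℤ) 0 1).natAbs ≤
          b1.natAbs := by
        rw [hconj]; simp [hb1]
      obtain ⟨P1, hP1⟩ := ih b1.natAbs (lt_of_lt_of_le hlt hb) (Qk k * A * (Qk k)⁻¹) htr hba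
      refine ⟨P1 * Qk k, ?_⟩
      have e : P1 * Qk k * A * (P1 * Qk k)⁻¹ = P1 * (Qk k * A * (Qk k)⁻¹) * P1⁻¹ := by
        group
      rw [e]
      exact hP1

/-- Any element of `SL(2, ℤ)` with trace strictly less than `-2` is conjugate in
`SL(2, ℤ)` to a matrix all of whose entries are strictly negative, i.e. both of
whose column vectors lie in the open third quadrant. -/
theorem sl2_trace_lt_neg_two_conjugate_third_quadrant
    (A : Matrix.SpecialLinearGroup (Fin 2) ℤ)
    (h : Matrix.trace (A : Matrix (Fin 2) (Fin 2) ℤ) < -2) :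
    ∃ P : Matrix.SpecialLinearGroup (Fin 2) ℤ,
      ((P * A * P⁻¹ : Matrix.SpecialLinearGroup (Fin 2) ℤ) :
          Matrix (Fin 2) (Fin 2) ℤ) 0 0 < 0 ∧
      ((P * A * P⁻¹ : Matrix.SpecialLinearGroup (Fin 2) ℤ) :
          Matrix (Fin 2) (Fin 2) ℤ) 0 1 < 0 ∧
      ((P * A * P⁻¹ : Matrix.SpecialLinearGroup (Fin 2) ℤ) :
          Matrix (Fin 2) (Fin 2) ℤ) 1 0 < 0 ∧
      ((P * A * P⁻¹ : Matrix.SpecialLinearGroup (Fin 2) ℤ) :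
          Matrix (Fin 2) (Fin 2) ℤ) 1 1 < 0 := by
  have htr : (A : Matrix (Fin 2) (Fin 2) ℤ) 0 0 + (A : Matrix (Fin 2) (Fin 2) ℤ) 1 1 ≤ -3 := by
    have := h
    rw [Matrix.trace_fin_two] at this
    omega
  have ht9 : 9 ≤ ((A : Matrix (Fin 2) (Fin 2) ℤ) 0 0 + (A : Matrix (Fin 2) (Fin 2) ℤ) 1 1)^2 := by
    nlinarith
  obtain ⟨P, hP⟩ := key ((A : Matrix (Fin 2) (Fin 2) ℤ) 0 1).natAbs A ht9 le_rfl
  set M := (P * A * P⁻¹ : SL2) with hM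
  set a' := (M : Matrix (Fin 2) (Fin 2) ℤ) 0 0 with ha'
  set b' := (M : Matrix (Fin 2) (Fin 2) ℤ) 0 1 with hb'
  set c' := (M : Matrix (Fin 2) (Fin 2) ℤ) 1 0 with hc'
  set d' := (M : Matrix (Fin 2) (Fin 2) ℤ) 1 1 with hd'
  have hdet : a' * d' - b' * c' = 1 := by
    have := M.2
    rw [Matrix.det_fin_two] at this
    exact this
  -- trace preserved
  have htrM : a' + d' ≤ -3 := by
    have e : Matrix.trace (M : Matrix (Fin 2) (Fin 2) ℤ) =
        Matrix.trace (A : Matrix (Fin 2) (Fin 2) ℤ) := by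
      rw [hM]
      rw [Matrix.SpecialLinearGroup.coe_mul, Matrix.SpecialLinearGroup.coe_mul]
      rw [Matrix.trace_mul_comm]
      rw [← Matrix.mul_assoc]
      have : ((P⁻¹ : SL2) : Matrix (Fin 2) (Fin 2) ℤ) * (P : Matrix (Fin 2) (Fin 2) ℤ) = 1 := by
        rw [← Matrix.SpecialLinearGroup.coe_mul, inv_mul_cancel]
        rfl
      rw [this, Matrix.one_mul]
    rw [Matrix.trace_fin_two, Matrix.trace_fin_two] at e
    rw [← ha', ← hd'] at e
    omega
  have had : 2 ≤ a' * d' := by nlinarith [hP]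
  have ha'neg : a' < 0 := by nlinarith
  have hd'neg : d' < 0 := by nlinarith
  rcases lt_trichotomy b' 0 with hbneg | hbz | hbpos
  · have hcneg : c' < 0 := by nlinarith [hP]
    exact ⟨P, ha'neg, hbneg, hcneg, hd'neg⟩
  · exfalso; rw [hbz] at hP; simp at hP
  · have hcpos : 0 < c' := by nlinarith [hP]
    refine ⟨Qk 0 * P, ?_⟩
    have e : Qk 0 * P * A * (Qk 0 * P)⁻¹ = Qk 0 * (P * A * P⁻¹) * (Qk 0)⁻¹ := by group
    rw [e, ← hM]
    have hconj := Qk_conj 0 M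
    rw [← ha', ← hb', ← hc', ← hd'] at hconj
    rw [hconj]
    refine ⟨?_, ?_, ?_, ?_⟩ <;> simp <;> linarith
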